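/- (Fenichel uniformity theorem for constrained switched linear systems.) Let d ≥ 1, let I be a metric space, let S : I → Matrix d d ℂ be continuous, and let Λ ⊆ Σ_I^+ be a nonempty compact θ_+-invariant subset. Then S is Λ-absolutely asymptotically stable (i.e. S_{i_n}···S_{i_1} → 0 as n → ∞ for every i(·) ∈ Λ) if and only if S is Λ-uniformly exponentially stable, i.e. there exist λ ∈ (0,1) and an integer N ≥ 1 such that ‖S_{i_n}···S_{i_1}‖ ≤ λ^n for all i(·) ∈ Λ and all n ≥ N. -/

import Mathlib

open Filter Topology MeasureTheory

/-- Operator norm on `d × d` complex matrices induced by the Euclidean norm on `ℂ^d`. -/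
noncomputable def opNorm {d : ℕ} (A : Matrix (Fin d) (Fin d) ℂ) : ℝ :=
  ‖Matrix.toEuclideanCLM (𝕜 := ℂ) A‖

/-- `prodS S x n = S_{i_n} ⋯ S_{i_1}` where `i_k = x (k-1)`. -/
noncomputable def prodS {d : ℕ} {I : Type*} (S : I → Matrix (Fin d) (Fin d) ℂ)
    (x : ℕ → I) : ℕ → Matrix (Fin d) (Fin d) ℂ
  | 0 => 1
  | n + 1 => S (x n) * prodS S x n

/-- `Λ` is invariant under the one-sided shift `θ₊`. -/
def ShiftInv {I : Type*} (Λ : Set (ℕ → I)) : Prop :=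
  ∀ x ∈ Λ, (fun n => x (n + 1)) ∈ Λ

/-- Joint spectral radius of `S` restricted to `Λ`. -/
noncomputable def jsr {d : ℕ} {I : Type*} (S : I → Matrix (Fin d) (Fin d) ℂ)
    (Λ : Set (ℕ → I)) : ℝ :=
  Filter.limsup (fun n : ℕ => ⨆ x : Λ, opNorm (prodS S x.1 n) ^ (1 / (n : ℝ))) Filter.atTop

/-! Pointwise convergence gives each `x ∈ Λ` a time `n ≥ 1` with `‖S_{i_n} ⋯ S_{i_1}‖ < 1/2`.
This is an open condition on `x`, so by compactness one bound `M` on these contraction times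
serves all of `Λ`. Shift invariance lets us cut a product of length `n` at successive contraction
times, which gives `‖S_{i_n} ⋯ S_{i_1}‖ ≤ C · 2^(-⌊n/M⌋)`, with `C` a bound (again by compactness)
on the products of length `< M`. The constant `C` is then absorbed into a slightly slower
exponential rate. -/

noncomputable def toEuclideanCLE (d : ℕ) :
    Matrix (Fin d) (Fin d) ℂ ≃L[ℂ] (EuclideanSpace ℂ (Fin d) →L[ℂ] EuclideanSpace ℂ (Fin d)) :=
  (Matrix.toEuclideanCLM (𝕜 := ℂ)).toAlgEquiv.toLinearEquiv.toContinuousLinearEquiv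

lemma opNorm_eq_norm_toEuclideanCLE {d : ℕ} (A : Matrix (Fin d) (Fin d) ℂ) :
    opNorm A = ‖toEuclideanCLE d A‖ := rfl

lemma opNorm_nonneg {d : ℕ} (A : Matrix (Fin d) (Fin d) ℂ) : 0 ≤ opNorm A :=
  norm_nonneg _

lemma opNorm_mul_le {d : ℕ} (A B : Matrix (Fin d) (Fin d) ℂ) :
    opNorm (A * B) ≤ opNorm A * opNorm B := by
  rw [opNorm, map_mul]
  exact norm_mul_le _ _

lemma continuous_opNorm {d : ℕ} : Continuous (opNorm (d := d)) :=
  (toEuclideanCLE d).continuous.norm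

lemma tendsto_opNorm_zero_iff {d : ℕ} {ι : Type*} {l : Filter ι}
    {A : ι → Matrix (Fin d) (Fin d) ℂ} :
    Tendsto (fun i => opNorm (A i)) l (𝓝 0) ↔ Tendsto A l (𝓝 0) := by
  rw [(toEuclideanCLE d).isUniformEmbedding.isEmbedding.tendsto_nhds_iff, map_zero,
    tendsto_zero_iff_norm_tendsto_zero (f := toEuclideanCLE d ∘ A)]
  rfl

lemma prodS_add {d : ℕ} {I : Type*} (S : I → Matrix (Fin d) (Fin d) ℂ) (x : ℕ → I) (m n : ℕ) :
    prodS S x (m + n) = prodS S (fun k => x (k + m)) n * prodS S x m := by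
  induction n with
  | zero => simp [prodS]
  | succ n ih => rw [← add_assoc, prodS, prodS, ih, add_comm n m, mul_assoc]

lemma continuous_prodS {d : ℕ} {I : Type*} [TopologicalSpace I]
    {S : I → Matrix (Fin d) (Fin d) ℂ} (hS : Continuous S) (n : ℕ) :
    Continuous fun x : ℕ → I => prodS S x n := by
  induction n with
  | zero => exact continuous_const
  | succ n ih => exact (hS.comp (continuous_apply n)).matrix_mul ih

lemma ShiftInv.shift_mem {I : Type*} {Λ : Set (ℕ → I)} (hinv : ShiftInv Λ) {x : ℕ → I}
    (hx : x ∈ Λ) (m : ℕ) : (fun k => x (k + m)) ∈ Λ := by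
  induction m with
  | zero => exact hx
  | succ m ih => simpa only [← add_assoc, add_right_comm _ 1 m] using hinv _ ih

lemma exists_pow_div_le_inv_mul_pow {a : ℝ} (ha₀ : 0 < a) (ha₁ : a < 1) {M : ℕ} (hM : 0 < M) :
    ∃ l : ℝ, 0 < l ∧ l < 1 ∧ ∀ n : ℕ, a ^ (n / M) ≤ a⁻¹ * l ^ n := by
  refine ⟨a ^ (M : ℝ)⁻¹, by positivity, Real.rpow_lt_one ha₀.le ha₁ (by positivity), fun n => ?_⟩
  have hroot : (a ^ (M : ℝ)⁻¹) ^ M = a := Real.rpow_inv_natCast_pow ha₀.le hM.ne'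
  calc a ^ (n / M) = a⁻¹ * a ^ (n / M + 1) := by field_simp; ring
    _ = a⁻¹ * (a ^ (M : ℝ)⁻¹) ^ (M * (n / M + 1)) := by rw [pow_mul, hroot]
    _ ≤ a⁻¹ * (a ^ (M : ℝ)⁻¹) ^ n := mul_le_mul_of_nonneg_left
        (pow_le_pow_of_le_one (by positivity) (Real.rpow_le_one ha₀.le ha₁.le (by positivity))
          (Nat.lt_mul_div_succ n hM).le) (by positivity)

lemma exists_pow_le_of_le_mul_pow (K : ℝ) {l : ℝ} (hl₀ : 0 < l) (hl₁ : l < 1) :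
    ∃ l' : ℝ, 0 < l' ∧ l' < 1 ∧ ∃ N : ℕ, 1 ≤ N ∧ ∀ n : ℕ, N ≤ n → K * l ^ n ≤ l' ^ n := by
  have hsqrt₁ : √l < 1 := (Real.sqrt_lt' one_pos).2 (by simpa using hl₁)
  have hdecay : Tendsto (fun n : ℕ => K * √l ^ n) atTop (𝓝 0) := by
    simpa using (tendsto_pow_atTop_nhds_zero_of_lt_one (Real.sqrt_nonneg l) hsqrt₁).const_mul K
  obtain ⟨N, hN⟩ := eventually_atTop.1 (hdecay.eventually (ge_mem_nhds one_pos))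
  refine ⟨√l, Real.sqrt_pos.2 hl₀, hsqrt₁, max N 1, le_max_right _ _, fun n hn => ?_⟩
  calc K * l ^ n = K * √l ^ n * √l ^ n := by
        rw [mul_assoc, ← mul_pow, Real.mul_self_sqrt hl₀.le]
    _ ≤ 1 * √l ^ n := by gcongr; exact hN n (le_of_max_le_left hn)
    _ = √l ^ n := one_mul _

section Uniformity

variable {d : ℕ} {I : Type*} {S : I → Matrix (Fin d) (Fin d) ℂ} {Λ : Set (ℕ → I)}

lemma opNorm_prodS_le_mul_pow_div (hinv : ShiftInv Λ) {M : ℕ} {a C : ℝ} (ha₀ : 0 ≤ a)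
    (ha₁ : a ≤ 1) (hC : 0 ≤ C)
    (hcontract : ∀ x ∈ Λ, ∃ m, 0 < m ∧ m ≤ M ∧ opNorm (prodS S x m) ≤ a)
    (hbound : ∀ x ∈ Λ, ∀ m < M, opNorm (prodS S x m) ≤ C) (n : ℕ) :
    ∀ x ∈ Λ, opNorm (prodS S x n) ≤ C * a ^ (n / M) := by
  induction n using Nat.strong_induction_on with
  | _ n ih =>
  intro x hx
  rcases lt_or_ge n M with hnM | hMn
  · simpa [Nat.div_eq_of_lt hnM] using hbound x hx n hnM
  obtain ⟨m, hm, hmM, hxm⟩ := hcontract x hx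
  obtain ⟨k, rfl⟩ := Nat.exists_eq_add_of_le (hmM.trans hMn)
  have hdiv : (m + k) / M ≤ k / M + 1 :=
    calc (m + k) / M ≤ (k + M) / M := Nat.div_le_div_right (by omega)
      _ = k / M + 1 := Nat.add_div_right k (by omega)
  have htail := ih k (by omega) _ (hinv.shift_mem hx m)
  calc opNorm (prodS S x (m + k))
      ≤ opNorm (prodS S (fun i => x (i + m)) k) * opNorm (prodS S x m) := by
        rw [prodS_add]; exact opNorm_mul_le _ _
    _ ≤ C * a ^ (k / M) * a :=
        mul_le_mul htail hxm (opNorm_nonneg _) ((opNorm_nonneg _).trans htail)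
    _ = C * a ^ (k / M + 1) := by ring
    _ ≤ C * a ^ ((m + k) / M) := mul_le_mul_of_nonneg_left (pow_le_pow_of_le_one ha₀ ha₁ hdiv) hC

variable [TopologicalSpace I]

lemma exists_uniform_contraction_time (hS : Continuous S) (hcomp : IsCompact Λ) {c : ℝ}
    (hc : ∀ x ∈ Λ, ∃ n, 0 < n ∧ opNorm (prodS S x n) < c) :
    ∃ M, 0 < M ∧ ∀ x ∈ Λ, ∃ m, 0 < m ∧ m ≤ M ∧ opNorm (prodS S x m) < c := by
  let U : ℕ → Set (ℕ → I) := fun M => ⋃ m ∈ Set.Ioc 0 M, {x | opNorm (prodS S x m) < c}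
  have hU_open : ∀ M, IsOpen (U M) := fun M => isOpen_biUnion fun m _ =>
    isOpen_lt (continuous_opNorm.comp (continuous_prodS hS m)) continuous_const
  have hU_mono : Monotone U := fun M M' h =>
    Set.biUnion_subset_biUnion_left (Set.Ioc_subset_Ioc_right h)
  have hΛU : Λ ⊆ ⋃ M, U M := fun x hx =>
    let ⟨n, hn, hxn⟩ := hc x hx
    Set.mem_iUnion.2 ⟨n, Set.mem_biUnion ⟨hn, le_rfl⟩ hxn⟩
  obtain ⟨M, hM⟩ := hcomp.elim_directed_cover U hU_open hΛU hU_mono.directed_le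
  refine ⟨M + 1, M.succ_pos, fun x hx => ?_⟩
  obtain ⟨m, ⟨hm, hmM⟩, hxm⟩ := Set.mem_iUnion₂.1 (hM hx)
  exact ⟨m, hm, hmM.trans M.le_succ, hxm⟩

lemma exists_bound_opNorm_prodS (hS : Continuous S) (hcomp : IsCompact Λ) (M : ℕ) :
    ∃ C, 0 ≤ C ∧ ∀ x ∈ Λ, ∀ m < M, opNorm (prodS S x m) ≤ C := by
  obtain ⟨C, hC⟩ : BddAbove (⋃ m ∈ Set.Iio M, (fun x => opNorm (prodS S x m)) '' Λ) :=
    (Set.finite_Iio M).bddAbove_biUnion.2 fun m _ =>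
      hcomp.bddAbove_image (continuous_opNorm.comp (continuous_prodS hS m)).continuousOn
  exact ⟨max C 0, le_max_right _ _, fun x hx m hm =>
    (hC (Set.mem_biUnion hm ⟨x, hx, rfl⟩)).trans (le_max_left _ _)⟩

end Uniformity

theorem abs_asymp_stable_iff_unif_exp_stable_general {d : ℕ} {I : Type*} [MetricSpace I]
    (S : I → Matrix (Fin d) (Fin d) ℂ) (hS : Continuous S)
    (Λ : Set (ℕ → I)) (hcomp : IsCompact Λ) (hinv : ShiftInv Λ) :
    (∀ x ∈ Λ, Filter.Tendsto (fun n : ℕ => prodS S x n) Filter.atTop (nhds 0)) ↔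
      ∃ l : ℝ, 0 < l ∧ l < 1 ∧ ∃ N : ℕ, 1 ≤ N ∧
        ∀ x ∈ Λ, ∀ n : ℕ, N ≤ n → opNorm (prodS S x n) ≤ l ^ n := by
  constructor
  · intro h
    have hcontract : ∀ x ∈ Λ, ∃ n, 0 < n ∧ opNorm (prodS S x n) < 1 / 2 := fun x hx =>
      (((tendsto_opNorm_zero_iff.2 (h x hx)).eventually (gt_mem_nhds one_half_pos)).and
        (eventually_gt_atTop 0)).exists.imp fun _ hn => ⟨hn.2, hn.1⟩
    obtain ⟨M, hM, hMcontract⟩ := exists_uniform_contraction_time hS hcomp hcontract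
    obtain ⟨C, hC, hCbound⟩ := exists_bound_opNorm_prodS hS hcomp M
    have hdecay := opNorm_prodS_le_mul_pow_div hinv (by norm_num) (by norm_num) hC
      (fun x hx => (hMcontract x hx).imp fun _ ⟨hm, hmM, hxm⟩ => ⟨hm, hmM, hxm.le⟩) hCbound
    obtain ⟨l, hl₀, hl₁, hl⟩ := exists_pow_div_le_inv_mul_pow one_half_pos one_half_lt_one hM
    obtain ⟨l', hl'₀, hl'₁, N, hN, hl'⟩ := exists_pow_le_of_le_mul_pow (C * (1 / 2)⁻¹) hl₀ hl₁
    refine ⟨l', hl'₀, hl'₁, N, hN, fun x hx n hn => ?_⟩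
    calc opNorm (prodS S x n) ≤ C * (1 / 2) ^ (n / M) := hdecay n x hx
      _ ≤ C * ((1 / 2)⁻¹ * l ^ n) := by gcongr; exact hl n
      _ = C * (1 / 2)⁻¹ * l ^ n := (mul_assoc _ _ _).symm
      _ ≤ l' ^ n := hl' n hn
  · rintro ⟨l, hl₀, hl₁, N, -, hbound⟩ x hx
    refine tendsto_opNorm_zero_iff.1 (squeeze_zero' (Eventually.of_forall fun n => opNorm_nonneg _)
      ?_ (tendsto_pow_atTop_nhds_zero_of_lt_one hl₀.le hl₁))
    exact eventually_atTop.2 ⟨N, hbound x hx⟩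

/-- **Fenichel uniformity theorem (Lemma 3.3).** `S` is `Λ`-absolutely asymptotically stable iff it is `Λ`-uniformly exponentially stable. -/
theorem abs_asymp_stable_iff_unif_exp_stable {d : ℕ} (hd : 1 ≤ d) {I : Type*} [MetricSpace I]
    (S : I → Matrix (Fin d) (Fin d) ℂ) (hS : Continuous S)
    (Λ : Set (ℕ → I)) (hne : Λ.Nonempty) (hcomp : IsCompact Λ) (hinv : ShiftInv Λ) :
    (∀ x ∈ Λ, Filter.Tendsto (fun n : ℕ => prodS S x n) Filter.atTop (nhds 0)) ↔
      ∃ l : ℝ, 0 < l ∧ l < 1 ∧ ∃ N : ℕ, 1 ≤ N ∧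
        ∀ x ∈ Λ, ∀ n : ℕ, N ≤ n → opNorm (prodS S x n) ≤ l ^ n :=
  abs_asymp_stable_iff_unif_exp_stable_general S hS Λ hcomp hinv
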